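/- Let (X_k, X_l) be a bivariate Pareto pair defined on the product probability measure ν = Exp(1) ⊗ Exp(1) ⊗ Gamma(γ_0,1) ⊗ Gamma(γ_k,1) ⊗ Gamma(γ_l,1) by X_k = σ_k·λ_k/(y_0 + y_k) and X_l = σ_l·λ_l/(y_0 + y_l), where σ_k, σ_l, γ_0, γ_k, γ_l > 0. Then for all s, t ≥ 0 the conditional survival probability satisfies ν{X_k > s and X_l > t} / ν{X_l > t} = (1 + s/σ_k)^{−γ_k} · (1 + s/(σ_k·(1 + t/σ_l)))^{−γ_0}. -/

import Mathlib

/-!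
Given the gamma variables `y = (y₀, y_k, y_l)`, the events `X_k > s` and `X_l > t` are the
independent exponential exceedances `λ_k > a (y₀ + y_k)` and `λ_l > b (y₀ + y_l)`, with
`a = s/σ_k`, `b = t/σ_l`. Their conditional probability `e^{-(a+b) y₀} e^{-a y_k} e^{-b y_l}`
factorises, and the gamma Laplace transform `E e^{-u Y} = (1 + u)^{-γ}` turns its mean into the
Pa^c joint survival function `(1+a)^{-γ_k} (1+b)^{-γ_l} (1+a+b)^{-γ₀}`. The denominator is the
case `s = 0`, and the ratio simplifies because `(1+a+b)/(1+b) = 1 + s/(σ_k (1 + t/σ_l))`.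
-/

open MeasureTheory ProbabilityTheory Real
open scoped ENNReal

instance (a r : ℝ) : SFinite (gammaMeasure a r) := by
  unfold gammaMeasure; infer_instance

instance (r : ℝ) : SFinite (expMeasure r) := by
  unfold expMeasure; infer_instance

lemma measurable_gammaPDF (a r : ℝ) : Measurable (gammaPDF a r) :=
  (measurable_gammaPDFReal a r).ennreal_ofReal

lemma ae_pos_gammaMeasure (a r : ℝ) : ∀ᵐ y ∂gammaMeasure a r, 0 < y := by
  rw [ae_iff]
  simp only [not_lt]
  change gammaMeasure a r (Set.Iic 0) = 0
  rw [gammaMeasure, withDensity_apply _ measurableSet_Iic,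
    setLIntegral_congr Iio_ae_eq_Iic.symm]
  exact lintegral_gammaPDF_of_nonpos le_rfl

lemma expMeasure_Ioi {r c : ℝ} (hr : 0 < r) (hc : 0 ≤ c) :
    expMeasure r (Set.Ioi c) = ENNReal.ofReal (exp (-(r * c))) := by
  have := isProbabilityMeasure_expMeasure hr
  have hle : exp (-(r * c)) ≤ 1 := exp_le_one_iff.2 (by nlinarith)
  rw [← Set.compl_Iic, prob_compl_eq_one_sub measurableSet_Iic, ← ofReal_cdf,
    cdf_expMeasure_eq hr, if_pos hc, ← ENNReal.ofReal_one,
    ← ENNReal.ofReal_sub _ (by linarith), sub_sub_cancel]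

lemma lintegral_exp_neg_mul_gammaMeasure {a r u : ℝ} (ha : 0 < a) (hr : 0 < r) (hu : -r < u) :
    ∫⁻ y, ENNReal.ofReal (exp (-(u * y))) ∂gammaMeasure a r
      = ENNReal.ofReal ((r / (r + u)) ^ a) := by
  have hru : 0 < r + u := by linarith
  have tilt : ∀ y, gammaPDF a r y * ENNReal.ofReal (exp (-(u * y)))
      = ENNReal.ofReal ((r / (r + u)) ^ a) * gammaPDF a (r + u) y := by
    intro y
    rcases lt_or_ge y 0 with hy | hy
    · simp [gammaPDF_of_neg hy]
    rw [gammaPDF_of_nonneg hy, gammaPDF_of_nonneg hy, ← ENNReal.ofReal_mul (by positivity),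
      ← ENNReal.ofReal_mul (by positivity), div_rpow hr.le hru.le, mul_assoc, ← exp_add]
    congr 1
    field_simp [(rpow_pos_of_pos hru a).ne']
    ring_nf
  rw [gammaMeasure, lintegral_withDensity_eq_lintegral_mul _ (measurable_gammaPDF a r)
    (by fun_prop)]
  simp only [Pi.mul_apply, tilt]
  rw [lintegral_const_mul _ (measurable_gammaPDF a (r + u)),
    lintegral_gammaPDF_eq_one ha hru, mul_one]

lemma lintegral_expMeasure_prod_indicator_lt_fst {β : Type*} [MeasurableSpace β]
    {ν : Measure β} [SFinite ν] {r : ℝ} (hr : 0 < r) {g : β → ℝ} (hg : Measurable g)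
    (hg₀ : ∀ᵐ y ∂ν, 0 ≤ g y) {f : β → ℝ≥0∞} (hf : Measurable f) :
    ∫⁻ w, {w : ℝ × β | g w.2 < w.1}.indicator (fun w => f w.2) w ∂(expMeasure r).prod ν
      = ∫⁻ y, ENNReal.ofReal (exp (-(r * g y))) * f y ∂ν := by
  have := isProbabilityMeasure_expMeasure hr
  have hmeas : Measurable ({w : ℝ × β | g w.2 < w.1}.indicator fun w => f w.2) :=
    (hf.comp measurable_snd).indicator (measurableSet_lt (hg.comp measurable_snd) measurable_fst)
  rw [lintegral_prod_symm _ hmeas.aemeasurable]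
  refine lintegral_congr_ae ?_
  filter_upwards [hg₀] with y hy
  have hfiber : ∀ x, {w : ℝ × β | g w.2 < w.1}.indicator (fun w => f w.2) (x, y)
      = (Set.Ioi (g y)).indicator (fun _ => f y) x := fun x => by
    simp [Set.indicator_apply]
  simp only [hfiber]
  rw [lintegral_indicator_const measurableSet_Ioi, expMeasure_Ioi hr hy, mul_comm]

lemma ae_prod_of_ae_of_ae {α β : Type*} [MeasurableSpace α] [MeasurableSpace β]
    {μ : Measure α} {ν : Measure β} [SFinite μ] {p : α → Prop} {q : β → Prop}
    (hp : ∀ᵐ x ∂μ, p x) (hq : ∀ᵐ y ∂ν, q y) : ∀ᵐ z ∂μ.prod ν, p z.1 ∧ q z.2 :=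
  (Measure.quasiMeasurePreserving_fst.ae hp).and (Measure.quasiMeasurePreserving_snd.ae hq)

lemma lt_mul_div_iff_div_mul_lt {s σ x d : ℝ} (hσ : 0 < σ) (hd : 0 < d) :
    s < σ * x / d ↔ s / σ * d < x := by
  rw [lt_div_iff₀ hd, div_mul_eq_mul_div, div_lt_iff₀ hσ, mul_comm x]

noncomputable abbrev gammaShapeMeasure (γ0 γk γl : ℝ) : Measure (ℝ × ℝ × ℝ) :=
  (gammaMeasure γ0 1).prod ((gammaMeasure γk 1).prod (gammaMeasure γl 1))

noncomputable abbrev paretoLatentMeasure (γ0 γk γl : ℝ) : Measure (ℝ × ℝ × ℝ × ℝ × ℝ) :=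
  (expMeasure 1).prod ((expMeasure 1).prod (gammaShapeMeasure γ0 γk γl))

lemma ae_pos_gammaShapeMeasure (γ0 γk γl : ℝ) :
    ∀ᵐ y ∂gammaShapeMeasure γ0 γk γl, 0 < y.1 ∧ 0 < y.2.1 ∧ 0 < y.2.2 :=
  ae_prod_of_ae_of_ae (ae_pos_gammaMeasure _ _)
    (ae_prod_of_ae_of_ae (ae_pos_gammaMeasure _ _) (ae_pos_gammaMeasure _ _))

lemma ae_pos_paretoLatentMeasure (γ0 γk γl : ℝ) :
    ∀ᵐ w ∂paretoLatentMeasure γ0 γk γl,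
      0 < w.1 ∧ 0 < w.2.1 ∧ 0 < w.2.2.1 ∧ 0 < w.2.2.2.1 ∧ 0 < w.2.2.2.2 :=
  ae_prod_of_ae_of_ae (ae_pos_gammaMeasure _ _)
    (ae_prod_of_ae_of_ae (ae_pos_gammaMeasure _ _) (ae_pos_gammaShapeMeasure γ0 γk γl))

lemma lintegral_exp_neg_gammaShapeMeasure {γ0 γk γl a b : ℝ} (hγ0 : 0 < γ0) (hγk : 0 < γk)
    (hγl : 0 < γl) (ha : 0 ≤ a) (hb : 0 ≤ b) :
    ∫⁻ y, ENNReal.ofReal (exp (-(a * (y.1 + y.2.1))))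
        * ENNReal.ofReal (exp (-(b * (y.1 + y.2.2)))) ∂gammaShapeMeasure γ0 γk γl
      = ENNReal.ofReal ((1 + a) ^ (-γk) * (1 + b) ^ (-γl) * (1 + a + b) ^ (-γ0)) := by
  have laplace : ∀ {γ u : ℝ}, 0 < γ → 0 ≤ u →
      ∫⁻ y, ENNReal.ofReal (exp (-(u * y))) ∂gammaMeasure γ 1 = ENNReal.ofReal ((1 + u) ^ (-γ)) :=
    fun hγ hu => by
      rw [lintegral_exp_neg_mul_gammaMeasure hγ one_pos (by linarith), one_div, inv_rpow
        (by positivity), rpow_neg (by positivity)]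
  have hsplit : ∀ y : ℝ × ℝ × ℝ,
      ENNReal.ofReal (exp (-(a * (y.1 + y.2.1)))) * ENNReal.ofReal (exp (-(b * (y.1 + y.2.2))))
        = ENNReal.ofReal (exp (-((a + b) * y.1)))
          * (ENNReal.ofReal (exp (-(a * y.2.1))) * ENNReal.ofReal (exp (-(b * y.2.2)))) := by
    intro y
    simp only [← ENNReal.ofReal_mul (exp_nonneg _), ← exp_add]
    ring_nf
  simp only [hsplit]
  rw [gammaShapeMeasure,
    lintegral_prod_mul (f := fun y => ENNReal.ofReal (exp (-((a + b) * y))))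
      (g := fun y : ℝ × ℝ =>
        ENNReal.ofReal (exp (-(a * y.1))) * ENNReal.ofReal (exp (-(b * y.2))))
      (by fun_prop) (by fun_prop),
    lintegral_prod_mul (f := fun y => ENNReal.ofReal (exp (-(a * y))))
      (g := fun y => ENNReal.ofReal (exp (-(b * y)))) (by fun_prop) (by fun_prop),
    laplace hγ0 (by positivity), laplace hγk ha, laplace hγl hb,
    ← ENNReal.ofReal_mul (by positivity), ← ENNReal.ofReal_mul (by positivity)]
  rw [← add_assoc]
  congr 1
  ring

lemma paretoLatentMeasure_scaled_exceedance {γ0 γk γl a b : ℝ} (hγ0 : 0 < γ0) (hγk : 0 < γk)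
    (hγl : 0 < γl) (ha : 0 ≤ a) (hb : 0 ≤ b) :
    paretoLatentMeasure γ0 γk γl
        {w | a * (w.2.2.1 + w.2.2.2.1) < w.1 ∧ b * (w.2.2.1 + w.2.2.2.2) < w.2.1}
      = ENNReal.ofReal ((1 + a) ^ (-γk) * (1 + b) ^ (-γl) * (1 + a + b) ^ (-γ0)) := by
  have hpos := ae_pos_gammaShapeMeasure γ0 γk γl
  have hB : MeasurableSet {r : ℝ × ℝ × ℝ × ℝ | b * (r.2.1 + r.2.2.2) < r.1} :=
    measurableSet_lt (by fun_prop) measurable_fst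
  have hk_threshold : ∀ᵐ r ∂(expMeasure 1).prod (gammaShapeMeasure γ0 γk γl),
      0 ≤ a * (r.2.1 + r.2.2.1) :=
    Measure.quasiMeasurePreserving_snd.ae (p := fun y => 0 ≤ a * (y.1 + y.2.1))
      (hpos.mono fun y ⟨h0, hk, _⟩ => by positivity)
  have hl_threshold : ∀ᵐ y ∂gammaShapeMeasure γ0 γk γl, 0 ≤ b * (y.1 + y.2.2) :=
    hpos.mono fun y ⟨h0, _, hl⟩ => by positivity
  have hA : MeasurableSet {w : ℝ × ℝ × ℝ × ℝ × ℝ |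
      a * (w.2.2.1 + w.2.2.2.1) < w.1 ∧ b * (w.2.2.1 + w.2.2.2.2) < w.2.1} :=
    (measurableSet_lt (by fun_prop) measurable_fst).inter (measurable_snd hB)
  calc paretoLatentMeasure γ0 γk γl
        {w | a * (w.2.2.1 + w.2.2.2.1) < w.1 ∧ b * (w.2.2.1 + w.2.2.2.2) < w.2.1}
      = ∫⁻ w, {w : ℝ × ℝ × ℝ × ℝ × ℝ | a * (w.2.2.1 + w.2.2.2.1) < w.1}.indicator
          (fun w => {r : ℝ × ℝ × ℝ × ℝ | b * (r.2.1 + r.2.2.2) < r.1}.indicator 1 w.2) w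
          ∂paretoLatentMeasure γ0 γk γl := by
        rw [← lintegral_indicator_one hA, Set.ofPred_and, ← Set.indicator_indicator]
        rfl
    _ = ∫⁻ r, {r : ℝ × ℝ × ℝ × ℝ | b * (r.2.1 + r.2.2.2) < r.1}.indicator
          (fun r => ENNReal.ofReal (exp (-(a * (r.2.1 + r.2.2.1))))) r
          ∂(expMeasure 1).prod (gammaShapeMeasure γ0 γk γl) := by
        rw [paretoLatentMeasure, lintegral_expMeasure_prod_indicator_lt_fst one_pos (by fun_prop)
          hk_threshold (measurable_one.indicator hB)]
        congr 1; ext r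
        simp [Set.indicator_apply]
    _ = ∫⁻ y, ENNReal.ofReal (exp (-(a * (y.1 + y.2.1))))
          * ENNReal.ofReal (exp (-(b * (y.1 + y.2.2)))) ∂gammaShapeMeasure γ0 γk γl := by
        rw [lintegral_expMeasure_prod_indicator_lt_fst
          (g := fun y : ℝ × ℝ × ℝ => b * (y.1 + y.2.2))
          (f := fun y => ENNReal.ofReal (exp (-(a * (y.1 + y.2.1))))) one_pos (by fun_prop)
          hl_threshold (by fun_prop)]
        simp only [one_mul]
        exact lintegral_congr fun _ => mul_comm _ _
    _ = _ := lintegral_exp_neg_gammaShapeMeasure hγ0 hγk hγl ha hb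

lemma paretoPair_joint_survival {σk σl γ0 γk γl s t : ℝ} (hσk : 0 < σk)
    (hσl : 0 < σl) (hγ0 : 0 < γ0) (hγk : 0 < γk) (hγl : 0 < γl) (hs : 0 ≤ s) (ht : 0 ≤ t) :
    paretoLatentMeasure γ0 γk γl
        {w | s < σk * w.1 / (w.2.2.1 + w.2.2.2.1) ∧ t < σl * w.2.1 / (w.2.2.1 + w.2.2.2.2)}
      = ENNReal.ofReal
          ((1 + s / σk) ^ (-γk) * (1 + t / σl) ^ (-γl) * (1 + s / σk + t / σl) ^ (-γ0)) := by
  rw [← paretoLatentMeasure_scaled_exceedance hγ0 hγk hγl (div_nonneg hs hσk.le)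
    (div_nonneg ht hσl.le)]
  refine measure_congr (Filter.eventuallyEq_set.2 ?_)
  filter_upwards [ae_pos_paretoLatentMeasure γ0 γk γl] with w ⟨_, _, h0, hk, hl⟩
  rw [lt_mul_div_iff_div_mul_lt hσk (add_pos h0 hk),
    lt_mul_div_iff_div_mul_lt hσl (add_pos h0 hl)]

/-- the conditional survival function of `X_k` given `X_l > t` in the
bivariate Pareto pair `X_k = σ_k λ_k/(y_0+y_k)`, `X_l = σ_l λ_l/(y_0+y_l)`:
`ν{X_k > s, X_l > t}/ν{X_l > t} = (1+s/σ_k)^{-γ_k} (1+s/(σ_k(1+t/σ_l)))^{-γ_0}`. -/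
theorem bivariate_pareto_conditional_survival_given_exceedance
    (σk σl γ0 γk γl : ℝ)
    (hσk : 0 < σk) (hσl : 0 < σl) (hγ0 : 0 < γ0) (hγk : 0 < γk) (hγl : 0 < γl)
    (ν : Measure (ℝ × ℝ × ℝ × ℝ × ℝ))
    (hν : ν = (gammaMeasure 1 1).prod ((gammaMeasure 1 1).prod
        ((gammaMeasure γ0 1).prod ((gammaMeasure γk 1).prod (gammaMeasure γl 1)))))
    (Xk Xl : ℝ × ℝ × ℝ × ℝ × ℝ → ℝ)
    (hXk : ∀ w, Xk w = σk * w.1 / (w.2.2.1 + w.2.2.2.1))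
    (hXl : ∀ w, Xl w = σl * w.2.1 / (w.2.2.1 + w.2.2.2.2))
    (s t : ℝ) (hs : 0 ≤ s) (ht : 0 ≤ t) :
    ν {w | s < Xk w ∧ t < Xl w} / ν {w | t < Xl w}
      = ENNReal.ofReal
          ((1 + s / σk) ^ (-γk) * (1 + s / (σk * (1 + t / σl))) ^ (-γ0)) := by
  obtain rfl : ν = paretoLatentMeasure γ0 γk γl := hν
  have hden : paretoLatentMeasure γ0 γk γl {w | t < Xl w}
      = paretoLatentMeasure γ0 γk γl {w | 0 < Xk w ∧ t < Xl w} := by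
    refine measure_congr (Filter.eventuallyEq_set.2 ?_)
    filter_upwards [ae_pos_paretoLatentMeasure γ0 γk γl] with w ⟨hx, _, h0, hk, _⟩
    have : 0 < Xk w := by rw [hXk]; positivity
    simp [this]
  rw [hden]
  simp only [hXk, hXl]
  rw [paretoPair_joint_survival hσk hσl hγ0 hγk hγl hs ht,
    paretoPair_joint_survival hσk hσl hγ0 hγk hγl le_rfl ht,
    ← ENNReal.ofReal_div_of_pos (by positivity)]
  have hb : 0 < 1 + t / σl := by positivity
  have harg : 1 + s / (σk * (1 + t / σl)) = (1 + s / σk + t / σl) / (1 + t / σl) := by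
    field_simp; ring
  rw [harg, div_rpow (by positivity) hb.le, zero_div, add_zero, one_rpow, one_mul]
  field_simp [(rpow_pos_of_pos hb (-γ0)).ne', (rpow_pos_of_pos hb (-γl)).ne']
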